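/- Let Q be a ground state profile and set ΛQ(x) = 2Q(x) + x·∇Q(x). Then L₊(ΛQ) = −2Q, i.e. the pointwise identity −Δ(ΛQ) + ΛQ + φ_{Q²}·ΛQ + 2φ_{Q·ΛQ}·Q = −2Q holds on ℝ³. -/

import Mathlib

open MeasureTheory Filter Real
open scoped Topology BigOperators

noncomputable section

abbrev E3 := EuclideanSpace ℝ (Fin 3)

/-- Newtonian potential of a real density. -/
def phiR (f : E3 → ℝ) (x : E3) : ℝ :=
  -(1 / (4 * π)) * ∫ y : E3, f y / ‖x - y‖

/-- Laplacian of a real-valued function. -/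
def lapR (f : E3 → ℝ) (x : E3) : ℝ :=
  ∑ i : Fin 3,
    fderiv ℝ (fun y => fderiv ℝ f y (EuclideanSpace.single i 1)) x (EuclideanSpace.single i 1)

/-- Ground state profile. -/
structure IsGroundState (Q : E3 → ℝ) : Prop where
  smooth : ContDiff ℝ (⊤ : ℕ∞) Q
  pos : ∀ x, 0 < Q x
  radial : ∀ x y : E3, ‖x‖ = ‖y‖ → Q x = Q y
  eqn : ∀ x, lapR Q x - phiR (fun y => (Q y) ^ 2) x * Q x = Q x
  decay : ∀ k : ℕ, ∃ C > (0:ℝ), ∃ c > (0:ℝ), ∀ x,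
    ‖iteratedFDeriv ℝ k Q x‖ ≤ C * Real.exp (-c * ‖x‖)

/-- (surrogate) membership in real `H¹(ℝ³)`. -/
def MemH1R (f : E3 → ℝ) : Prop :=
  MemLp f 2 volume ∧ Differentiable ℝ f ∧ MemLp (fun x => fderiv ℝ f x) 2 volume

/-- Square of the `H¹` norm of a real function. -/
def H1RNormSq (f : E3 → ℝ) : ℝ := (∫ x, f x ^ 2) + ∫ x, ‖fderiv ℝ f x‖ ^ 2

/-- (surrogate) membership in complex `H¹(ℝ³)`. -/
def MemH1 (f : E3 → ℂ) : Prop :=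
  MemLp f 2 volume ∧ Differentiable ℝ f ∧ MemLp (fun x => fderiv ℝ f x) 2 volume

/-- Hartree Hamiltonian (energy). -/
def energy (u : E3 → ℂ) : ℝ :=
  (∫ x, ‖fderiv ℝ u x‖ ^ 2) -
    (1/2) * ∫ x, ‖fderiv ℝ (phiR (fun y => ‖u y‖ ^ 2)) x‖ ^ 2

/-- Quadratic form of the linearized operator `L₊`. -/
def quadPlus (Q f : E3 → ℝ) : ℝ :=
  (∫ x, ‖fderiv ℝ f x‖ ^ 2) + (∫ x, f x ^ 2) +
    (∫ x, phiR (fun y => (Q y) ^ 2) x * f x ^ 2) +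
    2 * ∫ x, phiR (fun y => Q y * f y) x * Q x * f x

/-- Quadratic form of the linearized operator `L₋`. -/
def quadMinus (Q f : E3 → ℝ) : ℝ :=
  (∫ x, ‖fderiv ℝ f x‖ ^ 2) + (∫ x, f x ^ 2) +
    ∫ x, phiR (fun y => (Q y) ^ 2) x * f x ^ 2

/-- Distributional pairing `∫ (L₊ f) θ` against a test function `θ`. -/
def pairPlus (Q f θ : E3 → ℝ) : ℝ :=
  ∫ x, (f x * (-(lapR θ x) + θ x + phiR (fun y => (Q y) ^ 2) x * θ x) +
    2 * phiR (fun y => Q y * f y) x * Q x * θ x)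

/-- Distributional pairing `∫ (L₋ f) θ` against a test function `θ`. -/
def pairMinus (Q f θ : E3 → ℝ) : ℝ :=
  ∫ x, f x * (-(lapR θ x) + θ x + phiR (fun y => (Q y) ^ 2) x * θ x)

/-- `ΛQ = 2Q + x·∇Q`. -/
def lambdaQ (Q : E3 → ℝ) (x : E3) : ℝ := 2 * Q x + fderiv ℝ Q x x

end

noncomputable section AuxIntegrability

open Metric Set

lemma e3_finrank : Module.finrank ℝ E3 = 3 := by
  simp [finrank_euclideanSpace]

lemma integrableOn_inv_norm_sub (x : E3) :
    IntegrableOn (fun y : E3 => ‖x - y‖⁻¹) (ball x 1) volume := by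
  have hmeas : Measurable fun y : E3 => ‖x - y‖⁻¹ :=
    ((continuous_const.sub continuous_id).norm.measurable).inv
  constructor
  · exact hmeas.aestronglyMeasurable
  · rw [hasFiniteIntegral_iff_ofReal (Eventually.of_forall fun y => by positivity)]
    set μ := volume.restrict (ball x (1:ℝ)) with hμ
    rw [lintegral_eq_lintegral_meas_le μ (Eventually.of_forall fun y => by positivity)
      hmeas.aemeasurable]
    have hsub : ∀ t : ℝ, 0 < t → {a : E3 | t ≤ ‖x - a‖⁻¹} ⊆ closedBall x t⁻¹ := by
      intro t ht a ha
      simp only [mem_setOf_eq] at ha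
      rcases eq_or_ne a x with rfl | hax
      · simpa using (inv_pos.mpr ht).le
      · have hpos : 0 < ‖x - a‖ := by
          rw [norm_pos_iff, sub_ne_zero]; exact fun h => hax h.symm
        rw [mem_closedBall, dist_comm, dist_eq_norm]
        rw [le_inv_comm₀ ht hpos] at ha
        linarith [ha]
    have key : ∫⁻ t in Ioi (0:ℝ), μ {a : E3 | t ≤ ‖x - a‖⁻¹} ≤
        (∫⁻ t in Ioc (0:ℝ) 1, μ {a : E3 | t ≤ ‖x - a‖⁻¹}) +
        ∫⁻ t in Ioi (1:ℝ), μ {a : E3 | t ≤ ‖x - a‖⁻¹} :=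
      le_trans (lintegral_mono_set Ioi_subset_Ioc_union_Ioi) (lintegral_union_le _ _ _)
    refine lt_of_le_of_lt key (ENNReal.add_lt_top.2 ⟨?_, ?_⟩)
    · calc (∫⁻ t in Ioc (0:ℝ) 1, μ {a : E3 | t ≤ ‖x - a‖⁻¹})
          ≤ ∫⁻ _ in Ioc (0:ℝ) 1, volume (ball x 1) := by
            refine lintegral_mono fun t => ?_
            refine le_trans (measure_mono (subset_univ _)) (le_of_eq ?_)
            rw [hμ, Measure.restrict_apply_univ]
        _ < ⊤ := by
            rw [setLIntegral_const]
            exact ENNReal.mul_lt_top measure_ball_lt_top (by simp [Real.volume_Ioc])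
    · have hcb : ∀ t : ℝ, t ∈ Ioi (1:ℝ) → μ {a : E3 | t ≤ ‖x - a‖⁻¹} ≤
          ENNReal.ofReal (t⁻¹ ^ 3) * volume (ball (0:E3) 1) := by
        intro t ht
        have ht0 : (0:ℝ) < t := lt_trans one_pos ht
        refine le_trans (le_trans (Measure.restrict_le_self _) (measure_mono (hsub t ht0))) ?_
        rw [Measure.addHaar_closedBall volume x (by positivity), e3_finrank]
      calc (∫⁻ t in Ioi (1:ℝ), μ {a : E3 | t ≤ ‖x - a‖⁻¹})
          ≤ ∫⁻ t in Ioi (1:ℝ), ENNReal.ofReal (t⁻¹ ^ 3) * volume (ball (0:E3) 1) :=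
            setLIntegral_mono' measurableSet_Ioi hcb
        _ = (∫⁻ t in Ioi (1:ℝ), ENNReal.ofReal (t⁻¹ ^ 3)) * volume (ball (0:E3) 1) := by
            rw [lintegral_mul_const' _ _ measure_ball_lt_top.ne]
        _ < ⊤ := by
            refine ENNReal.mul_lt_top ?_ measure_ball_lt_top
            have hint : IntegrableOn (fun t : ℝ => t ^ (-3 : ℝ)) (Ioi (1:ℝ)) volume :=
              integrableOn_Ioi_rpow_of_lt (by norm_num) one_pos
            have := hint.setLIntegral_lt_top
            refine lt_of_le_of_lt (le_of_eq ?_) this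
            refine setLIntegral_congr_fun measurableSet_Ioi (fun t ht => ?_)
            have ht0 : (0:ℝ) < t := lt_trans one_pos ht
            rw [inv_pow, ← Real.rpow_natCast t 3, ← Real.rpow_neg ht0.le]
            norm_num

lemma integrable_exp_neg_norm {c : ℝ} (hc : 0 < c) :
    Integrable (fun y : E3 => Real.exp (-c * ‖y‖)) volume := by
  have h4 : (Module.finrank ℝ E3 : ℝ) < 4 := by rw [e3_finrank]; norm_num
  have base := integrable_one_add_norm (E := E3) (μ := volume) h4
  refine (base.const_mul ((1 + 4 / c) ^ 4)).mono'
    (Continuous.aestronglyMeasurable (by continuity)) ?_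
  refine Eventually.of_forall fun y => ?_
  have hy : (0:ℝ) ≤ ‖y‖ := norm_nonneg y
  have key : (1 + ‖y‖) ^ (4:ℕ) * Real.exp (-c * ‖y‖) ≤ (1 + 4 / c) ^ 4 := by
    have h1 : 1 + ‖y‖ ≤ (1 + 4 / c) * Real.exp (c / 4 * ‖y‖) := by
      have e1 : (1:ℝ) ≤ Real.exp (c / 4 * ‖y‖) := by
        rw [Real.one_le_exp_iff]; positivity
      have e2 : c / 4 * ‖y‖ ≤ Real.exp (c / 4 * ‖y‖) :=
        le_trans (by linarith [Real.add_one_le_exp (c / 4 * ‖y‖)]) le_rfl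
      have e3 : ‖y‖ ≤ 4 / c * Real.exp (c / 4 * ‖y‖) := by
        rw [div_mul_eq_mul_div, le_div_iff₀ hc]
        calc ‖y‖ * c = 4 * (c / 4 * ‖y‖) := by ring
          _ ≤ 4 * Real.exp (c / 4 * ‖y‖) := by linarith
      calc 1 + ‖y‖ ≤ Real.exp (c / 4 * ‖y‖) + 4 / c * Real.exp (c / 4 * ‖y‖) := by linarith
        _ = (1 + 4 / c) * Real.exp (c / 4 * ‖y‖) := by ring
    have h2 : (1 + ‖y‖) ^ (4:ℕ) ≤ ((1 + 4 / c) * Real.exp (c / 4 * ‖y‖)) ^ (4:ℕ) := by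
      exact pow_le_pow_left₀ (by positivity) h1 4
    have h3 : ((1 + 4 / c) * Real.exp (c / 4 * ‖y‖)) ^ (4:ℕ) =
        (1 + 4 / c) ^ 4 * Real.exp (c * ‖y‖) := by
      rw [mul_pow, ← Real.exp_nat_mul]
      ring_nf
    calc (1 + ‖y‖) ^ (4:ℕ) * Real.exp (-c * ‖y‖)
        ≤ (1 + 4 / c) ^ 4 * Real.exp (c * ‖y‖) * Real.exp (-c * ‖y‖) := by
          rw [← h3]; exact mul_le_mul_of_nonneg_right h2 (Real.exp_nonneg _)
      _ = (1 + 4 / c) ^ 4 * Real.exp (c * ‖y‖ + -c * ‖y‖) := by rw [mul_assoc, Real.exp_add]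
      _ = (1 + 4 / c) ^ 4 := by simp
  have hpow : (1 + ‖y‖) ^ (-(4:ℝ)) = ((1 + ‖y‖) ^ (4:ℕ))⁻¹ := by
    rw [Real.rpow_neg (by positivity), ← Real.rpow_natCast]
    norm_num
  rw [Real.norm_eq_abs, abs_of_nonneg (Real.exp_nonneg _), hpow]
  have hd : Real.exp (-c * ‖y‖) ≤ (1 + 4 / c) ^ 4 / (1 + ‖y‖) ^ (4:ℕ) := by
    rw [le_div_iff₀ (by positivity)]
    calc Real.exp (-c * ‖y‖) * (1 + ‖y‖) ^ (4:ℕ)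
        = (1 + ‖y‖) ^ (4:ℕ) * Real.exp (-c * ‖y‖) := by ring
      _ ≤ (1 + 4 / c) ^ 4 := key
  calc Real.exp (-c * ‖y‖) ≤ (1 + 4 / c) ^ 4 / (1 + ‖y‖) ^ (4:ℕ) := hd
    _ = (1 + 4 / c) ^ 4 * ((1 + ‖y‖) ^ (4:ℕ))⁻¹ := by ring

/-- Main integrability lemma: exponentially decaying density against Newton kernel. -/
lemma integrable_div_kernel {h : E3 → ℝ} (hmeas : Measurable h) {C c : ℝ} (hc : 0 < c)
    (hb : ∀ y, |h y| ≤ C * Real.exp (-c * ‖y‖)) (x : E3) :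
    Integrable (fun y : E3 => h y / ‖x - y‖) volume := by
  have hker : Measurable fun y : E3 => ‖x - y‖⁻¹ :=
    ((continuous_const.sub continuous_id).norm.measurable).inv
  have hm : AEStronglyMeasurable (fun y : E3 => h y / ‖x - y‖) volume := by
    refine Measurable.aestronglyMeasurable ?_
    simpa [div_eq_mul_inv] using (show Measurable fun y => h y * ‖x - y‖⁻¹ from hmeas.mul hker)
  have hC : 0 ≤ C := le_trans (abs_nonneg _) ((hb 0).trans (le_of_eq (by simp)))
  rw [← integrableOn_univ, ← union_compl_self (ball x 1), integrableOn_union]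
  constructor
  · refine ((integrableOn_inv_norm_sub x).const_mul C).mono' hm.restrict
      (Eventually.of_forall fun y => ?_)
    rw [Real.norm_eq_abs, abs_div, abs_norm, div_eq_mul_inv]
    have h1 : |h y| ≤ C := by
      refine le_trans (hb y) ?_
      calc C * Real.exp (-c * ‖y‖) ≤ C * 1 := by
            refine mul_le_mul_of_nonneg_left ?_ hC
            rw [Real.exp_le_one_iff]
            have : (0:ℝ) ≤ c * ‖y‖ := by positivity
            linarith
        _ = C := mul_one C
    exact mul_le_mul_of_nonneg_right h1 (by positivity)
  · refine ((integrable_exp_neg_norm hc).const_mul C).integrableOn.mono' hm.restrict ?_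
    rw [ae_restrict_iff' (measurableSet_ball.compl)]
    refine Eventually.of_forall fun y hy => ?_
    have h1 : (1:ℝ) ≤ ‖x - y‖ := by
      simp only [mem_compl_iff, mem_ball, not_lt, dist_comm] at hy
      rwa [dist_eq_norm] at hy
    rw [Real.norm_eq_abs, abs_div, abs_norm]
    calc |h y| / ‖x - y‖ ≤ |h y| / 1 := by
          exact div_le_div_of_nonneg_left (abs_nonneg _) one_pos h1 |>.trans (le_of_eq rfl)
      _ = |h y| := div_one _
      _ ≤ C * Real.exp (-c * ‖y‖) := hb y

end AuxIntegrability

noncomputable section AuxExtra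

lemma mul_exp_decay {c t : ℝ} (hc : 0 < c) (_ht : 0 ≤ t) :
    t * Real.exp (-c * t) ≤ (2 / c) * Real.exp (-(c / 2) * t) := by
  have e1 : (c / 2) * t ≤ Real.exp ((c / 2) * t) := by
    linarith [Real.add_one_le_exp ((c / 2) * t)]
  have e2 : t ≤ (2 / c) * Real.exp ((c / 2) * t) := by
    have h7 : (2:ℝ)/c * ((c/2)*t) = t := by field_simp
    calc t = 2/c * ((c/2)*t) := h7.symm
      _ ≤ 2/c * Real.exp ((c / 2) * t) := mul_le_mul_of_nonneg_left e1 (by positivity)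
  calc t * Real.exp (-c * t)
      ≤ (2 / c) * Real.exp ((c / 2) * t) * Real.exp (-c * t) :=
        mul_le_mul_of_nonneg_right e2 (Real.exp_nonneg _)
    _ = (2 / c) * Real.exp ((c / 2) * t + -c * t) := by rw [mul_assoc, Real.exp_add]
    _ = (2 / c) * Real.exp (-(c / 2) * t) := by ring_nf

lemma norm_fderiv_le_iteratedFDeriv_one (f : E3 → ℝ) (y : E3) :
    ‖fderiv ℝ f y‖ ≤ ‖iteratedFDeriv ℝ 1 f y‖ := by
  refine ContinuousLinearMap.opNorm_le_bound _ (norm_nonneg _) fun v => ?_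
  have h1 : fderiv ℝ f y v = iteratedFDeriv ℝ 1 f y (fun _ => v) := by
    rw [iteratedFDeriv_one_apply]
  rw [h1]
  calc ‖iteratedFDeriv ℝ 1 f y (fun _ => v)‖
      ≤ ‖iteratedFDeriv ℝ 1 f y‖ * ∏ _i : Fin 1, ‖v‖ :=
        (iteratedFDeriv ℝ 1 f y).le_opNorm _
    _ = ‖iteratedFDeriv ℝ 1 f y‖ * ‖v‖ := by simp

end AuxExtra
noncomputable section AuxDeriv

open ContinuousLinearMap

lemma hasFDerivAt_clm_apply_const {G : Type*} [NormedAddCommGroup G] [NormedSpace ℝ G]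
    {c : E3 → E3 →L[ℝ] G} {c' : E3 →L[ℝ] E3 →L[ℝ] G} {z : E3} (v : E3)
    (hc : HasFDerivAt c c' z) : HasFDerivAt (fun y => c y v) (c'.flip v) z := by
  simpa using hc.clm_apply (hasFDerivAt_const v z)

lemma hasFDerivAt_clm_apply_self {G : Type*} [NormedAddCommGroup G] [NormedSpace ℝ G]
    {c : E3 → E3 →L[ℝ] G} {c' : E3 →L[ℝ] E3 →L[ℝ] G} {z : E3}
    (hc : HasFDerivAt c c' z) : HasFDerivAt (fun y => c y y) (c z + c'.flip z) z := by
  simpa using hc.clm_apply (hasFDerivAt_id z)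

variable {Q : E3 → ℝ}

lemma cd_f1 (hQ : ContDiff ℝ (⊤ : ℕ∞) Q) : ContDiff ℝ (⊤ : ℕ∞) (fderiv ℝ Q) :=
  hQ.fderiv_right (by simp)

lemma cd_f2 (hQ : ContDiff ℝ (⊤ : ℕ∞) Q) : ContDiff ℝ (⊤ : ℕ∞) (fderiv ℝ (fderiv ℝ Q)) :=
  (cd_f1 hQ).fderiv_right (by simp)

lemma hasF1 (hQ : ContDiff ℝ (⊤ : ℕ∞) Q) (z : E3) : HasFDerivAt Q (fderiv ℝ Q z) z :=
  (hQ.differentiable (by simp) z).hasFDerivAt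

lemma hasF2 (hQ : ContDiff ℝ (⊤ : ℕ∞) Q) (z : E3) :
    HasFDerivAt (fderiv ℝ Q) (fderiv ℝ (fderiv ℝ Q) z) z :=
  ((cd_f1 hQ).differentiable (by simp) z).hasFDerivAt

lemma hasF3 (hQ : ContDiff ℝ (⊤ : ℕ∞) Q) (z : E3) :
    HasFDerivAt (fderiv ℝ (fderiv ℝ Q)) (fderiv ℝ (fderiv ℝ (fderiv ℝ Q)) z) z :=
  ((cd_f2 hQ).differentiable (by simp) z).hasFDerivAt

lemma sym2 (hQ : ContDiff ℝ (⊤ : ℕ∞) Q) (z a b : E3) :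
    fderiv ℝ (fderiv ℝ Q) z a b = fderiv ℝ (fderiv ℝ Q) z b a :=
  second_derivative_symmetric (fun y => hasF1 hQ y) (hasF2 hQ z) a b

lemma sym12_3 (hQ : ContDiff ℝ (⊤ : ℕ∞) Q) (z a b : E3) :
    fderiv ℝ (fderiv ℝ (fderiv ℝ Q)) z a b = fderiv ℝ (fderiv ℝ (fderiv ℝ Q)) z b a :=
  second_derivative_symmetric (fun y => hasF2 hQ y) (hasF3 hQ z) a b

lemma sym23_3 (hQ : ContDiff ℝ (⊤ : ℕ∞) Q) (z a b c : E3) :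
    fderiv ℝ (fderiv ℝ (fderiv ℝ Q)) z a b c = fderiv ℝ (fderiv ℝ (fderiv ℝ Q)) z a c b := by
  have hfun : (fun y => fderiv ℝ (fderiv ℝ Q) y b c) = fun y => fderiv ℝ (fderiv ℝ Q) y c b :=
    funext fun y => sym2 hQ y b c
  have h1 : HasFDerivAt (fun y => fderiv ℝ (fderiv ℝ Q) y b c)
      (((fderiv ℝ (fderiv ℝ (fderiv ℝ Q)) z).flip b).flip c) z :=
    hasFDerivAt_clm_apply_const c (hasFDerivAt_clm_apply_const b (hasF3 hQ z))
  have h2 : HasFDerivAt (fun y => fderiv ℝ (fderiv ℝ Q) y c b)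
      (((fderiv ℝ (fderiv ℝ (fderiv ℝ Q)) z).flip c).flip b) z :=
    hasFDerivAt_clm_apply_const b (hasFDerivAt_clm_apply_const c (hasF3 hQ z))
  rw [hfun] at h1
  have h3 := h1.unique h2
  have h4 := ContinuousLinearMap.ext_iff.mp h3 a
  simpa [ContinuousLinearMap.flip_apply] using h4

/-- `lapR` as a sum of second derivatives. -/
lemma lapR_eq (hQ : ContDiff ℝ (⊤ : ℕ∞) Q) (x : E3) :
    lapR Q x = ∑ i : Fin 3,
      fderiv ℝ (fderiv ℝ Q) x (EuclideanSpace.single i 1) (EuclideanSpace.single i 1) := by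
  unfold lapR
  refine Finset.sum_congr rfl fun i _ => ?_
  rw [(hasFDerivAt_clm_apply_const (EuclideanSpace.single i 1) (hasF2 hQ x)).fderiv]
  simp [ContinuousLinearMap.flip_apply]

lemma contDiff_lapR (hQ : ContDiff ℝ (⊤ : ℕ∞) Q) : ContDiff ℝ (⊤ : ℕ∞) (lapR Q) := by
  have : lapR Q = fun x => ∑ i : Fin 3,
      fderiv ℝ (fderiv ℝ Q) x (EuclideanSpace.single i 1) (EuclideanSpace.single i 1) :=
    funext fun x => lapR_eq hQ x
  rw [this]
  exact ContDiff.sum fun i _ =>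
    (((cd_f2 hQ).clm_apply contDiff_const).clm_apply contDiff_const)

lemma hasFDerivAt_lapR (hQ : ContDiff ℝ (⊤ : ℕ∞) Q) (x : E3) :
    HasFDerivAt (lapR Q) (∑ i : Fin 3,
      (((fderiv ℝ (fderiv ℝ (fderiv ℝ Q)) x).flip
        (EuclideanSpace.single i 1)).flip (EuclideanSpace.single i 1))) x := by
  have hfun : lapR Q = fun z => ∑ i : Fin 3,
      fderiv ℝ (fderiv ℝ Q) z (EuclideanSpace.single i 1) (EuclideanSpace.single i 1) :=
    funext fun z => lapR_eq hQ z
  rw [hfun]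
  exact HasFDerivAt.fun_sum fun i _ =>
    hasFDerivAt_clm_apply_const _ (hasFDerivAt_clm_apply_const _ (hasF3 hQ x))

lemma fderiv_lapR_apply (hQ : ContDiff ℝ (⊤ : ℕ∞) Q) (x u : E3) :
    fderiv ℝ (lapR Q) x u = ∑ i : Fin 3,
      fderiv ℝ (fderiv ℝ (fderiv ℝ Q)) x u
        (EuclideanSpace.single i 1) (EuclideanSpace.single i 1) := by
  rw [(hasFDerivAt_lapR hQ x).fderiv]
  simp [ContinuousLinearMap.flip_apply, ContinuousLinearMap.sum_apply]

/-- Laplacian of `ΛQ`. -/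
lemma lapR_lambdaQ (hQ : ContDiff ℝ (⊤ : ℕ∞) Q) (x : E3) :
    lapR (lambdaQ Q) x = 4 * lapR Q x + fderiv ℝ (lapR Q) x x := by
  classical
  -- derivative of lambdaQ at every point
  have hlam : ∀ z : E3, HasFDerivAt (lambdaQ Q)
      ((2:ℝ) • fderiv ℝ Q z + (fderiv ℝ Q z + (fderiv ℝ (fderiv ℝ Q) z).flip z)) z := by
    intro z
    exact ((hasF1 hQ z).const_mul (2:ℝ)).add (hasFDerivAt_clm_apply_self (hasF2 hQ z))
  have hinner : ∀ v : E3, (fun y => fderiv ℝ (lambdaQ Q) y v) =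
      fun y => 2 * fderiv ℝ Q y v + (fderiv ℝ Q y v + fderiv ℝ (fderiv ℝ Q) y v y) := by
    intro v
    funext y
    rw [(hlam y).fderiv]
    simp [ContinuousLinearMap.flip_apply]
  have hterm : ∀ i : Fin 3,
      fderiv ℝ (fun y => fderiv ℝ (lambdaQ Q) y (EuclideanSpace.single i 1)) x
        (EuclideanSpace.single i 1) =
      4 * fderiv ℝ (fderiv ℝ Q) x (EuclideanSpace.single i 1) (EuclideanSpace.single i 1) +
      fderiv ℝ (fderiv ℝ (fderiv ℝ Q)) x (EuclideanSpace.single i 1)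
        (EuclideanSpace.single i 1) x := by
    intro i
    set v := EuclideanSpace.single i (1:ℝ) with hv
    have hA : HasFDerivAt (fun y => fderiv ℝ Q y v)
        ((fderiv ℝ (fderiv ℝ Q) x).flip v) x :=
      hasFDerivAt_clm_apply_const v (hasF2 hQ x)
    have hB0 : HasFDerivAt (fun y => fderiv ℝ (fderiv ℝ Q) y v)
        ((fderiv ℝ (fderiv ℝ (fderiv ℝ Q)) x).flip v) x :=
      hasFDerivAt_clm_apply_const v (hasF3 hQ x)
    have hB : HasFDerivAt (fun y => fderiv ℝ (fderiv ℝ Q) y v y)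
        (fderiv ℝ (fderiv ℝ Q) x v +
          ((fderiv ℝ (fderiv ℝ (fderiv ℝ Q)) x).flip v).flip x) x :=
      hasFDerivAt_clm_apply_self hB0
    have htot : HasFDerivAt
        (fun y => 2 * fderiv ℝ Q y v + (fderiv ℝ Q y v + fderiv ℝ (fderiv ℝ Q) y v y))
        ((2:ℝ) • ((fderiv ℝ (fderiv ℝ Q) x).flip v) +
          (((fderiv ℝ (fderiv ℝ Q) x).flip v) +
            (fderiv ℝ (fderiv ℝ Q) x v +
              ((fderiv ℝ (fderiv ℝ (fderiv ℝ Q)) x).flip v).flip x))) x :=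
      (hA.const_mul (2:ℝ)).add (hA.add hB)
    rw [hinner v, htot.fderiv]
    simp only [ContinuousLinearMap.add_apply, ContinuousLinearMap.smul_apply,
      ContinuousLinearMap.flip_apply, smul_eq_mul]
    ring
  have hsum : lapR (lambdaQ Q) x = ∑ i : Fin 3,
      (4 * fderiv ℝ (fderiv ℝ Q) x (EuclideanSpace.single i 1) (EuclideanSpace.single i 1) +
       fderiv ℝ (fderiv ℝ (fderiv ℝ Q)) x (EuclideanSpace.single i 1)
         (EuclideanSpace.single i 1) x) := by
    unfold lapR
    exact Finset.sum_congr rfl fun i _ => hterm i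
  have hsym : ∀ i : Fin 3,
      fderiv ℝ (fderiv ℝ (fderiv ℝ Q)) x (EuclideanSpace.single i 1)
        (EuclideanSpace.single i 1) x =
      fderiv ℝ (fderiv ℝ (fderiv ℝ Q)) x x (EuclideanSpace.single i 1)
        (EuclideanSpace.single i 1) := by
    intro i
    rw [sym23_3 hQ x (EuclideanSpace.single i 1) (EuclideanSpace.single i 1) x]
    rw [sym12_3 hQ x (EuclideanSpace.single i 1) x]
  rw [hsum, Finset.sum_add_distrib, lapR_eq hQ x, fderiv_lapR_apply hQ x x, Finset.mul_sum]
  congr 1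
  exact Finset.sum_congr rfl fun i _ => hsym i

end AuxDeriv
noncomputable section AuxScaling

open Metric Set ContinuousLinearMap

/-- The scaling identity for the Newtonian potential:
`phiR (y·∇g) = x·∇(phiR g) - 2 phiR g`. -/
lemma phiR_scaling (g : E3 → ℝ) (hg : ContDiff ℝ (⊤ : ℕ∞) g) {C c : ℝ} (hc : 0 < c)
    (hg0 : ∀ y, |g y| ≤ C * Real.exp (-c * ‖y‖))
    (hg1 : ∀ y, ‖fderiv ℝ g y‖ ≤ C * Real.exp (-c * ‖y‖))
    (x : E3) (hdx : DifferentiableAt ℝ (phiR g) x) :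
    phiR (fun y => fderiv ℝ g y y) x = fderiv ℝ (phiR g) x x - 2 * phiR g x := by
  have hC : 0 ≤ C := le_trans (abs_nonneg _) ((hg0 0).trans (le_of_eq (by simp)))
  set Φ : E3 → ℝ := fun z => ∫ y : E3, g y / ‖z - y‖ with hΦdef
  have hπ : (4 * π) ≠ 0 := by positivity
  have hphi : ∀ z, phiR g z = -(1 / (4 * π)) * Φ z := fun z => rfl
  have hΦ : Φ = fun z => -(4 * π) * phiR g z := by
    funext z; rw [hphi z]; field_simp
  have hΦdiff : DifferentiableAt ℝ Φ x := by
    rw [hΦ]; exact hdx.const_mul _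
  have hΦderiv : fderiv ℝ Φ x x = -(4 * π) * fderiv ℝ (phiR g) x x := by
    rw [hΦ, fderiv_const_mul hdx]; simp
  set F : ℝ → E3 → ℝ := fun l y => g (l • y) / ‖x - y‖ with hF
  set F' : ℝ → E3 → ℝ := fun l y => fderiv ℝ g (l • y) y / ‖x - y‖ with hF'
  set bound : E3 → ℝ := fun y => (C * (4 / c)) * Real.exp (-(c / 4) * ‖y‖) / ‖x - y‖
    with hbound
  -- derivative under the integral sign
  have key : HasDerivAt (fun l => ∫ y : E3, F l y) (∫ y : E3, F' 1 y) 1 := by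
    have hF_meas : ∀ᶠ l in nhds (1:ℝ), AEStronglyMeasurable (F l) volume := by
      refine Filter.Eventually.of_forall fun l => Measurable.aestronglyMeasurable ?_
      have : Continuous fun y : E3 => g (l • y) :=
        hg.continuous.comp (by fun_prop)
      exact this.measurable.div ((continuous_const.sub continuous_id).norm.measurable)
    have hF_int : Integrable (F 1) volume := by
      have h1 : F 1 = fun y => g y / ‖x - y‖ := by funext y; simp [hF]
      rw [h1]
      exact integrable_div_kernel hg.continuous.measurable hc hg0 x
    have hF'_meas : AEStronglyMeasurable (F' 1) volume := by
      rw [hF']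
      refine Measurable.aestronglyMeasurable ?_
      show Measurable fun y : E3 => fderiv ℝ g ((1:ℝ) • y) y / ‖x - y‖
      have hcont : Continuous fun y : E3 => fderiv ℝ g ((1:ℝ) • y) y := by
        have h1 : Continuous fun y : E3 => fderiv ℝ g ((1:ℝ) • y) :=
          (hg.continuous_fderiv (by simp)).comp (by fun_prop)
        exact h1.clm_apply continuous_id
      have hker : Measurable fun y : E3 => ‖x - y‖ := by fun_prop
      exact hcont.measurable.div hker
    have h_bound : ∀ᵐ y : E3 ∂volume, ∀ l ∈ ball (1:ℝ) (1/2), ‖F' l y‖ ≤ bound y := by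
      refine Filter.Eventually.of_forall fun y l hl => ?_
      have hl2 : (1:ℝ)/2 ≤ |l| := by
        rw [mem_ball, Real.dist_eq] at hl
        cases' abs_sub_lt_iff.mp hl with h1 h2
        cases' le_or_gt 0 l with h h
        · rw [abs_of_nonneg h]; linarith
        · linarith [neg_abs_le l, abs_nonneg l]
      have hnum : |fderiv ℝ g (l • y) y| ≤ C * (4 / c) * Real.exp (-(c / 4) * ‖y‖) := by
        have h1 : |fderiv ℝ g (l • y) y| ≤ ‖fderiv ℝ g (l • y)‖ * ‖y‖ :=
          (fderiv ℝ g (l • y)).le_opNorm y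
        have h2 : ‖fderiv ℝ g (l • y)‖ ≤ C * Real.exp (-(c / 2) * ‖y‖) := by
          refine (hg1 (l • y)).trans ?_
          have h5 : -c * ‖l • y‖ ≤ -(c / 2) * ‖y‖ := by
            rw [norm_smul]
            have h6 : (1:ℝ)/2 * ‖y‖ ≤ |l| * ‖y‖ :=
              mul_le_mul_of_nonneg_right hl2 (norm_nonneg y)
            have : ‖(l:ℝ)‖ = |l| := rfl
            rw [this]
            nlinarith [norm_nonneg y]
          exact mul_le_mul_of_nonneg_left (Real.exp_le_exp.mpr h5) hC
        have h3 : ‖y‖ * Real.exp (-(c / 2) * ‖y‖) ≤ (4 / c) * Real.exp (-(c / 4) * ‖y‖) := by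
          have e1 : (c / 4) * ‖y‖ ≤ Real.exp ((c / 4) * ‖y‖) := by
            linarith [Real.add_one_le_exp ((c / 4) * ‖y‖)]
          have e2 : ‖y‖ ≤ (4 / c) * Real.exp ((c / 4) * ‖y‖) := by
            have h7 : (4:ℝ)/c * ((c/4)*‖y‖) = ‖y‖ := by field_simp
            calc ‖y‖ = 4/c * ((c/4)*‖y‖) := h7.symm
              _ ≤ 4/c * Real.exp ((c / 4) * ‖y‖) :=
                  mul_le_mul_of_nonneg_left e1 (by positivity)
          calc ‖y‖ * Real.exp (-(c / 2) * ‖y‖)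
              ≤ (4 / c) * Real.exp ((c / 4) * ‖y‖) * Real.exp (-(c / 2) * ‖y‖) :=
                mul_le_mul_of_nonneg_right e2 (Real.exp_nonneg _)
            _ = (4 / c) * Real.exp ((c / 4) * ‖y‖ + -(c / 2) * ‖y‖) := by
                rw [mul_assoc, Real.exp_add]
            _ = (4 / c) * Real.exp (-(c / 4) * ‖y‖) := by ring_nf
        calc |fderiv ℝ g (l • y) y| ≤ ‖fderiv ℝ g (l • y)‖ * ‖y‖ := h1
          _ ≤ C * Real.exp (-(c / 2) * ‖y‖) * ‖y‖ :=
              mul_le_mul_of_nonneg_right h2 (norm_nonneg y)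
          _ = C * (‖y‖ * Real.exp (-(c / 2) * ‖y‖)) := by ring
          _ ≤ C * ((4 / c) * Real.exp (-(c / 4) * ‖y‖)) :=
              mul_le_mul_of_nonneg_left h3 hC
          _ = C * (4 / c) * Real.exp (-(c / 4) * ‖y‖) := by ring
      rw [hF', hbound]
      simp only [Real.norm_eq_abs, abs_div, abs_norm]
      rcases eq_or_lt_of_le (norm_nonneg (x - y)) with h0 | h0
      · rw [← h0]; simp
      · gcongr
    have bound_int : Integrable bound volume := by
      exact integrable_div_kernel (h := fun y : E3 => (C * (4 / c)) * Real.exp (-(c/4) * ‖y‖))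
        (by fun_prop) (c := c/4) (by positivity)
        (C := C * (4 / c)) (fun y => by rw [abs_of_nonneg (by positivity)]) x
    have h_diff : ∀ᵐ y : E3 ∂volume, ∀ l ∈ ball (1:ℝ) (1/2),
        HasDerivAt (fun l => F l y) (F' l y) l := by
      refine Filter.Eventually.of_forall fun y l _ => ?_
      have h1 : HasDerivAt (fun l : ℝ => l • y) ((1:ℝ) • y) l := (hasDerivAt_id l).smul_const y
      rw [one_smul] at h1
      have h2 : HasDerivAt (fun l : ℝ => g (l • y)) (fderiv ℝ g (l • y) y) l :=
        (hasF1 hg (l • y)).comp_hasDerivAt l h1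
      exact h2.div_const ‖x - y‖
    exact (hasDerivAt_integral_of_dominated_loc_of_deriv_le (Metric.ball_mem_nhds _ (by norm_num : (0:ℝ) < 1/2))
      hF_meas hF_int hF'_meas h_bound bound_int h_diff).2
  -- change of variables: for l > 0, ∫ F l = (l^2)⁻¹ * Φ (l • x)
  have hcv : ∀ l : ℝ, 0 < l → (∫ y : E3, F l y) = (l ^ 2)⁻¹ * Φ (l • x) := by
    intro l hl
    have hl0 : l ≠ 0 := hl.ne'
    set f : E3 → ℝ := fun z => g z / ‖x - l⁻¹ • z‖ with hf
    have h1 : ∀ y : E3, F l y = f (l • y) := by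
      intro y
      rw [hF, hf]
      simp [smul_smul, inv_mul_cancel₀ hl0]
    have h2 : (∫ y : E3, F l y) = ∫ y : E3, f (l • y) :=
      integral_congr_ae (Filter.Eventually.of_forall h1)
    rw [h2, MeasureTheory.Measure.integral_comp_smul volume f l, e3_finrank]
    have h3 : ∀ z : E3, f z = l * (g z / ‖l • x - z‖) := by
      intro z
      show g z / ‖x - l⁻¹ • z‖ = l * (g z / ‖l • x - z‖)
      have h4 : ‖x - l⁻¹ • z‖ = l⁻¹ * ‖l • x - z‖ := by
        have h5 : x - l⁻¹ • z = l⁻¹ • (l • x - z) := by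
          rw [smul_sub, smul_smul, inv_mul_cancel₀ hl0, one_smul]
        rw [h5, norm_smul, Real.norm_eq_abs, abs_of_pos (inv_pos.mpr hl)]
      rw [h4, div_eq_mul_inv, mul_inv, inv_inv, div_eq_mul_inv]
      ring
    have h6 : (∫ z : E3, f z) = l * Φ (l • x) := by
      rw [hΦdef]
      rw [show (fun z : E3 => f z) = fun z : E3 => l * (g z / ‖l • x - z‖) from funext h3]
      exact integral_const_mul l _
    rw [h6, smul_eq_mul]
    rw [abs_of_pos (by positivity : (0:ℝ) < (l ^ 3)⁻¹)]
    field_simp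
  -- derivative of the right-hand side
  have hR : HasDerivAt (fun l : ℝ => (l ^ 2)⁻¹ * Φ (l • x))
      (-2 * Φ x + fderiv ℝ Φ x x) 1 := by
    have hpow : HasDerivAt (fun l : ℝ => l ^ 2) 2 1 := by
      simpa using hasDerivAt_pow 2 (1:ℝ)
    have hinv : HasDerivAt (fun l : ℝ => (l ^ 2)⁻¹) (-2) 1 := by
      have := hpow.inv (by norm_num : (1:ℝ) ^ 2 ≠ 0)
      exact this.congr_deriv (by norm_num)
    have hline : HasDerivAt (fun l : ℝ => l • x) x 1 := by
      simpa using (hasDerivAt_id (1:ℝ)).smul_const x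
    have hcomp : HasDerivAt (fun l : ℝ => Φ (l • x)) (fderiv ℝ Φ x x) 1 := by
      have h7 : HasFDerivAt Φ (fderiv ℝ Φ x) ((1:ℝ) • x) := by
        rw [one_smul]; exact hΦdiff.hasFDerivAt
      exact h7.comp_hasDerivAt 1 hline
    have := hinv.mul hcomp
    exact this.congr_deriv (by simp)
  have hev : (fun l => ∫ y : E3, F l y) =ᶠ[nhds (1:ℝ)]
      (fun l : ℝ => (l ^ 2)⁻¹ * Φ (l • x)) := by
    filter_upwards [eventually_gt_nhds (by norm_num : (0:ℝ) < 1)] with l hl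
    exact hcv l hl
  have key' : HasDerivAt (fun l => ∫ y : E3, F l y) (-2 * Φ x + fderiv ℝ Φ x x) 1 :=
    hR.congr_of_eventuallyEq hev
  have huniq : (∫ y : E3, F' 1 y) = -2 * Φ x + fderiv ℝ Φ x x := key.unique key'
  have hfin : (∫ y : E3, F' 1 y) = ∫ y : E3, fderiv ℝ g y y / ‖x - y‖ := by
    refine integral_congr_ae (Filter.Eventually.of_forall fun y => ?_)
    rw [hF']
    simp
  have : phiR (fun y => fderiv ℝ g y y) x =
      -(1 / (4 * π)) * (-2 * Φ x + fderiv ℝ Φ x x) := by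
    show -(1 / (4 * π)) * (∫ y : E3, fderiv ℝ g y y / ‖x - y‖) = _
    rw [← hfin, huniq]
  rw [this, hΦderiv, hΦ]
  show -(1 / (4 * π)) * (-2 * (-(4 * π) * phiR g x) + -(4 * π) * fderiv ℝ (phiR g) x x) = _
  field_simp
  ring

end AuxScaling
/-- the identity `L₊(ΛQ) = -2Q`. -/
theorem Lplus_lambdaQ (Q : E3 → ℝ) (hQ : IsGroundState Q) :
    ∀ x, -(lapR (lambdaQ Q) x) + lambdaQ Q x +
        phiR (fun y => (Q y) ^ 2) x * lambdaQ Q x +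
        2 * phiR (fun y => Q y * lambdaQ Q y) x * Q x = -2 * Q x := by
  intro x
  have hsm : ContDiff ℝ (⊤ : ℕ∞) Q := hQ.smooth
  set g : E3 → ℝ := fun y => Q y * Q y with hgdef
  have hgQ2 : (fun y => (Q y) ^ 2) = g := funext fun y => by rw [hgdef]; ring
  have hg : ContDiff ℝ (⊤ : ℕ∞) g := hsm.mul hsm
  -- decay bounds
  obtain ⟨C0, hC0, c0, hc0, hd0⟩ := hQ.decay 0
  obtain ⟨C1, hC1, c1, hc1, hd1⟩ := hQ.decay 1
  have hQb : ∀ y, |Q y| ≤ C0 * Real.exp (-c0 * ‖y‖) := by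
    intro y
    have := hd0 y
    rwa [norm_iteratedFDeriv_zero, Real.norm_eq_abs] at this
  have hf1b : ∀ y, ‖fderiv ℝ Q y‖ ≤ C1 * Real.exp (-c1 * ‖y‖) := fun y =>
    (norm_fderiv_le_iteratedFDeriv_one Q y).trans (hd1 y)
  set c : ℝ := min c0 c1 with hcdef
  have hc : 0 < c := lt_min hc0 hc1
  set C : ℝ := max (C0 * C0) (2 * (C0 * C1)) with hCdef
  have hdg : ∀ y, fderiv ℝ g y = Q y • fderiv ℝ Q y + Q y • fderiv ℝ Q y := fun y =>
    fderiv_mul (hsm.differentiable (by simp) y) (hsm.differentiable (by simp) y)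
  have hexpmono : ∀ (a b : ℝ) (t : ℝ), 0 ≤ t → c ≤ b →
      Real.exp (-b * t) ≤ Real.exp (-c * t) := by
    intro a b t ht hb
    apply Real.exp_le_exp.mpr
    nlinarith
  have hg0 : ∀ y, |g y| ≤ C * Real.exp (-c * ‖y‖) := by
    intro y
    have h1 : |g y| = |Q y| * |Q y| := by rw [hgdef]; exact abs_mul _ _
    have h2 : |Q y| * |Q y| ≤ (C0 * Real.exp (-c0 * ‖y‖)) * (C0 * Real.exp (-c0 * ‖y‖)) :=
      mul_le_mul (hQb y) (hQb y) (abs_nonneg _) (by positivity)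
    have h3 : (C0 * Real.exp (-c0 * ‖y‖)) * (C0 * Real.exp (-c0 * ‖y‖)) =
        C0 * C0 * Real.exp (-(c0 + c0) * ‖y‖) := by
      rw [show (-(c0 + c0) * ‖y‖) = -c0 * ‖y‖ + -c0 * ‖y‖ by ring, Real.exp_add]; ring
    have h4 : Real.exp (-(c0 + c0) * ‖y‖) ≤ Real.exp (-c * ‖y‖) :=
      hexpmono 0 (c0 + c0) ‖y‖ (norm_nonneg y)
        (le_trans (min_le_left _ _) (by linarith))
    calc |g y| = |Q y| * |Q y| := h1
      _ ≤ C0 * C0 * Real.exp (-(c0 + c0) * ‖y‖) := by rw [← h3]; exact h2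
      _ ≤ C0 * C0 * Real.exp (-c * ‖y‖) :=
          mul_le_mul_of_nonneg_left h4 (by positivity)
      _ ≤ C * Real.exp (-c * ‖y‖) :=
          mul_le_mul_of_nonneg_right (le_max_left _ _) (Real.exp_nonneg _)
  have hg1 : ∀ y, ‖fderiv ℝ g y‖ ≤ C * Real.exp (-c * ‖y‖) := by
    intro y
    have h1 : ‖fderiv ℝ g y‖ ≤ 2 * (|Q y| * ‖fderiv ℝ Q y‖) := by
      rw [hdg y]
      calc ‖Q y • fderiv ℝ Q y + Q y • fderiv ℝ Q y‖
          ≤ ‖Q y • fderiv ℝ Q y‖ + ‖Q y • fderiv ℝ Q y‖ := norm_add_le _ _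
        _ = 2 * (|Q y| * ‖fderiv ℝ Q y‖) := by
            rw [norm_smul, Real.norm_eq_abs]; ring
    have h2 : |Q y| * ‖fderiv ℝ Q y‖ ≤
        (C0 * Real.exp (-c0 * ‖y‖)) * (C1 * Real.exp (-c1 * ‖y‖)) :=
      mul_le_mul (hQb y) (hf1b y) (norm_nonneg _) (by positivity)
    have h3 : (C0 * Real.exp (-c0 * ‖y‖)) * (C1 * Real.exp (-c1 * ‖y‖)) =
        C0 * C1 * Real.exp (-(c0 + c1) * ‖y‖) := by
      rw [show (-(c0 + c1) * ‖y‖) = -c0 * ‖y‖ + -c1 * ‖y‖ by ring, Real.exp_add]; ring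
    have h4 : Real.exp (-(c0 + c1) * ‖y‖) ≤ Real.exp (-c * ‖y‖) :=
      hexpmono 0 (c0 + c1) ‖y‖ (norm_nonneg y)
        (le_trans (min_le_left _ _) (by linarith))
    calc ‖fderiv ℝ g y‖ ≤ 2 * (|Q y| * ‖fderiv ℝ Q y‖) := h1
      _ ≤ 2 * (C0 * C1 * Real.exp (-(c0 + c1) * ‖y‖)) := by
          rw [← h3] at *
          exact mul_le_mul_of_nonneg_left h2 (by norm_num)
      _ = 2 * (C0 * C1) * Real.exp (-(c0 + c1) * ‖y‖) := by ring
      _ ≤ 2 * (C0 * C1) * Real.exp (-c * ‖y‖) :=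
          mul_le_mul_of_nonneg_left h4 (by positivity)
      _ ≤ C * Real.exp (-c * ‖y‖) :=
          mul_le_mul_of_nonneg_right (le_max_right _ _) (Real.exp_nonneg _)
  -- the potential W, smooth via the equation
  have hWfun : phiR g = fun z => (lapR Q z - Q z) / Q z := by
    funext z
    have he := hQ.eqn z
    rw [hgQ2] at he
    rw [eq_div_iff (hQ.pos z).ne']
    linarith
  have hWcd : ContDiff ℝ (⊤ : ℕ∞) (phiR g) := by
    rw [hWfun]
    exact ((contDiff_lapR hsm).sub hsm).div hsm fun z => (hQ.pos z).ne'
  have hWdiff : Differentiable ℝ (phiR g) := hWcd.differentiable (by simp)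
  -- scaling identity
  have hscal := phiR_scaling g hg hc hg0 hg1 x (hWdiff x)
  -- splitting of phiR (Q * lambdaQ)
  have hint1 : Integrable (fun y => g y / ‖x - y‖) volume :=
    integrable_div_kernel hg.continuous.measurable hc hg0 x
  have hdgb : ∀ y, |fderiv ℝ g y y| ≤ (C * (2 / c)) * Real.exp (-(c/2) * ‖y‖) := by
    intro y
    have h1 : |fderiv ℝ g y y| ≤ ‖fderiv ℝ g y‖ * ‖y‖ := (fderiv ℝ g y).le_opNorm y
    calc |fderiv ℝ g y y| ≤ ‖fderiv ℝ g y‖ * ‖y‖ := h1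
      _ ≤ (C * Real.exp (-c * ‖y‖)) * ‖y‖ :=
          mul_le_mul_of_nonneg_right (hg1 y) (norm_nonneg y)
      _ = C * (‖y‖ * Real.exp (-c * ‖y‖)) := by ring
      _ ≤ C * ((2 / c) * Real.exp (-(c/2) * ‖y‖)) := by
          refine mul_le_mul_of_nonneg_left (mul_exp_decay hc (norm_nonneg y)) ?_
          exact le_trans (abs_nonneg _) ((hg0 0).trans (le_of_eq (by simp)))
      _ = (C * (2 / c)) * Real.exp (-(c/2) * ‖y‖) := by ring
  have hint2 : Integrable (fun y => fderiv ℝ g y y / ‖x - y‖) volume := by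
    refine integrable_div_kernel ?_ (by positivity : (0:ℝ) < c/2) hdgb x
    have hcont : Continuous fun y : E3 => fderiv ℝ g y y :=
      (hg.continuous_fderiv (by simp)).clm_apply continuous_id
    exact hcont.measurable
  have hsplit : phiR (fun y => Q y * lambdaQ Q y) x =
      2 * phiR g x + (1/2) * phiR (fun y => fderiv ℝ g y y) x := by
    have hptw : ∀ y, Q y * lambdaQ Q y / ‖x - y‖ =
        2 * (g y / ‖x - y‖) + (1/2) * (fderiv ℝ g y y / ‖x - y‖) := by
      intro y
      have h1 : fderiv ℝ g y y = Q y * fderiv ℝ Q y y + Q y * fderiv ℝ Q y y := by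
        rw [hdg y]; simp
      rw [h1]
      show Q y * (2 * Q y + fderiv ℝ Q y y) / ‖x - y‖ = _
      rw [hgdef]
      ring
    have hintegral : (∫ y : E3, Q y * lambdaQ Q y / ‖x - y‖) =
        2 * (∫ y : E3, g y / ‖x - y‖) + (1/2) * ∫ y : E3, fderiv ℝ g y y / ‖x - y‖ := by
      rw [show (fun y : E3 => Q y * lambdaQ Q y / ‖x - y‖) =
        fun y => 2 * (g y / ‖x - y‖) + (1/2) * (fderiv ℝ g y y / ‖x - y‖) from funext hptw]
      rw [integral_add (hint1.const_mul 2) (hint2.const_mul (1/2)),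
        integral_const_mul, integral_const_mul]
    show -(1 / (4 * π)) * (∫ y : E3, Q y * lambdaQ Q y / ‖x - y‖) = _
    rw [hintegral]
    show _ = 2 * (-(1 / (4 * π)) * ∫ y : E3, g y / ‖x - y‖) +
      (1/2) * (-(1 / (4 * π)) * ∫ y : E3, fderiv ℝ g y y / ‖x - y‖)
    ring
  -- Laplacian identities
  have E1 : lapR (lambdaQ Q) x = 4 * lapR Q x + fderiv ℝ (lapR Q) x x := lapR_lambdaQ hsm x
  have E2 : ∀ z, lapR Q z = Q z + phiR g z * Q z := by
    intro z
    have he := hQ.eqn z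
    rw [hgQ2] at he
    linarith
  have E3 : fderiv ℝ (lapR Q) x x =
      fderiv ℝ Q x x + (phiR g x * fderiv ℝ Q x x + Q x * fderiv ℝ (phiR g) x x) := by
    have hlapfun : lapR Q = fun z => Q z + phiR g z * Q z := funext E2
    rw [hlapfun]
    rw [fderiv_fun_add (hsm.differentiable (by simp) x)
      (show DifferentiableAt ℝ (fun z => phiR g z * Q z) x from ((hWdiff x)).mul (hsm.differentiable (by simp) x))]
    rw [fderiv_fun_mul ((hWdiff x)) (hsm.differentiable (by simp) x)]
    simp only [ContinuousLinearMap.add_apply, ContinuousLinearMap.smul_apply, smul_eq_mul]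
  -- final algebra
  have E4 : phiR (fun y => Q y * lambdaQ Q y) x =
      phiR g x + (1/2) * fderiv ℝ (phiR g) x x := by
    rw [hsplit, hscal]; ring
  have hlQ : lambdaQ Q x = 2 * Q x + fderiv ℝ Q x x := rfl
  rw [hgQ2, E1, E4, hlQ, E3, E2 x]
  ring
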